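/- Let N be an odd positive integer and consider the operator J on functions f : ℤ/Nℤ → ℂ given by (J f)(x) = (1 + cos(π(2x+1)/N)) f(x+1) + 2cos(2πx/N) f(x) + (1 + cos(π(2x−1)/N)) f(x−1) (this is the operator J associated with a = (N−1)/2). Then J is diagonalizable with N distinct real eigenvalues, and every eigenvector of J is an eigenvector of the discrete Fourier transform F_N; in particular, J's eigenvectors form an orthogonal eigenbasis of F_N on L²(ℤ/Nℤ). -/

import Mathlib

open Complex

/-- The (non-normalized) discrete Fourier transform on `ZMod N`:
`(dft N f) k = ∑_{j=0}^{N-1} exp(-2πi j k / N) f(j)`. -/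
noncomputable def dft (N : ℕ) (f : ZMod N → ℂ) : ZMod N → ℂ := fun k =>
  ∑ j ∈ Finset.range N,
    Complex.exp (-(2 * Real.pi * Complex.I * (j : ℂ) * (k.val : ℂ)) / (N : ℂ)) * f (j : ZMod N)


/-- The operator `J` associated with `a = (N−1)/2`:
`(J f)(x) = (1 + cos(π(2x+1)/N)) f(x+1) + 2cos(2πx/N) f(x) + (1 + cos(π(2x−1)/N)) f(x−1)`. -/
noncomputable def Jbig (N : ℕ) (f : ZMod N → ℂ) : ZMod N → ℂ := fun x =>
  ((1 + Real.cos (Real.pi * (2 * (x.val : ℝ) + 1) / N) : ℝ) : ℂ) * f (x + 1) +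
    ((2 * Real.cos (2 * Real.pi * (x.val : ℝ) / N) : ℝ) : ℂ) * f x +
    ((1 + Real.cos (Real.pi * (2 * (x.val : ℝ) - 1) / N) : ℝ) : ℂ) * f (x - 1)

/-!
`J` is a cyclic tridiagonal operator with real coefficients, hence self-adjoint, and the spectral
theorem gives an orthonormal eigenbasis. Its off-diagonal coefficient `1 + cos (π (2x+1) / N)`
vanishes only at `x = (N-1)/2`, which cuts the cycle open: through the three-term recurrence an
eigenvector is determined by its value at `(N+1)/2`, so every eigenspace is a line and the
eigenvalues are distinct. Writing the coefficients in terms of `ψ x = exp (2πi x / N)` and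
`exp (πi / N)`, the kernel of `F_N ∘ J` is symmetric in its two variables, i.e. `F_N` commutes
with `J`; hence `F_N` preserves each eigenline of `J`.
-/

open Finset ComplexConjugate
open scoped ZMod

namespace ZMod

variable {N : ℕ}

def jacobiOp (b d : ZMod N → ℝ) : Module.End ℂ (ZMod N → ℂ) where
  toFun f x := b x * f (x + 1) + d x * f x + b (x - 1) * f (x - 1)
  map_add' f g := by ext x; simp only [Pi.add_apply]; ring
  map_smul' c f := by ext x; simp only [Pi.smul_apply, smul_eq_mul, RingHom.id_apply]; ring

lemma jacobiOp_apply (b d : ZMod N → ℝ) (f : ZMod N → ℂ) (x : ZMod N) :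
    jacobiOp b d f x = b x * f (x + 1) + d x * f x + b (x - 1) * f (x - 1) := rfl

variable [NeZero N] {b d : ZMod N → ℝ} {p : ZMod N}

theorem eq_zero_of_jacobiOp_eq_smul (hb : ∀ x, b x = 0 ↔ x = p) {c : ℂ} {f : ZMod N → ℂ}
    (hf : jacobiOp b d f = c • f) (hp : f (p + 1) = 0) : f = 0 := by
  -- `b (p + n) * f (p + n)` is the backward term of the recurrence at `p + n + 1`;
  -- it vanishes for `n = 0` because `b p = 0`.
  have hchain : ∀ n : ℕ, n < N → b (p + n) * f (p + n) = 0 ∧ f (p + n + 1) = 0 := by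
    intro n
    induction n with
    | zero => simp [(hb p).2 rfl, hp]
    | succ n ih =>
      intro hn
      obtain ⟨hprev, hcur⟩ := ih (by omega)
      have hne : b (p + n + 1) ≠ 0 := by
        rw [Ne, hb, add_assoc, add_eq_left, ← Nat.cast_succ, ZMod.natCast_eq_zero_iff]
        exact Nat.not_dvd_of_pos_of_lt n.succ_pos hn
      have heq := congrFun hf (p + n + 1)
      simp only [jacobiOp_apply, Pi.smul_apply, smul_eq_mul, add_sub_cancel_right, hcur,
        hprev, mul_zero, add_zero] at heq
      push_cast
      refine ⟨by rw [← add_assoc, hcur, mul_zero], ?_⟩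
      rw [← add_assoc]
      exact (mul_eq_zero.mp heq).resolve_left (by exact_mod_cast hne)
  funext y
  have := (hchain (y - p - 1).val (ZMod.val_lt _)).2
  rwa [ZMod.natCast_zmod_val, show p + (y - p - 1) + 1 = y by abel] at this

theorem exists_eq_smul_of_jacobiOp_eq_smul (hb : ∀ x, b x = 0 ↔ x = p) {c : ℂ}
    {f g : ZMod N → ℂ} (hf : jacobiOp b d f = c • f) (hg : jacobiOp b d g = c • g)
    (hf0 : f ≠ 0) : ∃ α : ℂ, g = α • f := by
  have hfp : f (p + 1) ≠ 0 := fun h ↦ hf0 (eq_zero_of_jacobiOp_eq_smul hb hf h)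
  refine ⟨g (p + 1) / f (p + 1),
    sub_eq_zero.mp (eq_zero_of_jacobiOp_eq_smul (d := d) (c := c) hb ?_ ?_)⟩
  · rw [map_sub, LinearMap.map_smul, hf, hg, smul_sub, smul_comm c]
  · simp [hfp]

theorem sum_conj_jacobiOp_mul (b d : ZMod N → ℝ) (f g : ZMod N → ℂ) :
    ∑ x, conj (jacobiOp b d f x) * g x = ∑ x, conj (f x) * jacobiOp b d g x := by
  have shift (φ : ZMod N → ℂ) : ∑ x, φ (x + 1) = ∑ x, φ x := Equiv.sum_comp (Equiv.addRight 1) φ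
  have h₁ : ∑ x, b x * conj (f (x + 1)) * g x = ∑ x, conj (f x) * (b (x - 1) * g (x - 1)) := by
    rw [← shift fun x ↦ conj (f x) * (b (x - 1) * g (x - 1))]
    simp only [add_sub_cancel_right]
    exact sum_congr rfl fun _ _ ↦ by ring
  have h₃ : ∑ x, b (x - 1) * conj (f (x - 1)) * g x = ∑ x, conj (f x) * (b x * g (x + 1)) := by
    rw [← shift fun x ↦ b (x - 1) * conj (f (x - 1)) * g x]
    simp only [add_sub_cancel_right]
    exact sum_congr rfl fun _ _ ↦ by ring
  simp only [jacobiOp_apply, map_add, map_mul, Complex.conj_ofReal, add_mul, mul_add,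
    sum_add_distrib, h₁, h₃]
  have h₂ : ∑ x, d x * conj (f x) * g x = ∑ x, conj (f x) * (d x * g x) :=
    sum_congr rfl fun _ _ ↦ by ring
  rw [h₂]
  ring

noncomputable def jacobiOpL2 (b d : ZMod N → ℝ) : Module.End ℂ (EuclideanSpace ℂ (ZMod N)) :=
  (WithLp.linearEquiv 2 ℂ (ZMod N → ℂ)).symm.conj (jacobiOp b d)

theorem isSymmetric_jacobiOpL2 (b d : ZMod N → ℝ) : (jacobiOpL2 b d).IsSymmetric := by
  intro f g
  simpa [jacobiOpL2, PiLp.inner_apply, mul_comm] using sum_conj_jacobiOp_mul b d f g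

theorem exists_orthogonal_eigenbasis_jacobiOp (hb : ∀ x, b x = 0 ↔ x = p) :
    ∃ (μ : Fin N → ℝ) (v : Fin N → ZMod N → ℂ), Function.Injective μ ∧ (∀ i, v i ≠ 0) ∧
      (∀ i, jacobiOp b d (v i) = (μ i : ℂ) • v i) ∧ Submodule.span ℂ (Set.range v) = ⊤ ∧
      ∀ i j, i ≠ j → ∑ x, v i x * conj (v j x) = 0 := by
  have hT := isSymmetric_jacobiOpL2 b d
  have hN : Module.finrank ℂ (EuclideanSpace ℂ (ZMod N)) = N := by simp
  set B := hT.eigenvectorBasis hN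
  have hB i : jacobiOp b d (B i) = (hT.eigenvalues hN i : ℂ) • B i :=
    congrArg WithLp.ofLp (hT.apply_eigenvectorBasis hN i)
  have hB0 i : (B i : ZMod N → ℂ) ≠ 0 := by
    simpa using B.orthonormal.ne_zero i
  refine ⟨hT.eigenvalues hN, fun i ↦ B i, ?_, hB0, hB, ?_, ?_⟩
  · intro i j hij
    by_contra hne
    obtain ⟨α, hα⟩ := exists_eq_smul_of_jacobiOp_eq_smul hb (hB j) (hij ▸ hB i) (hB0 j)
    replace hα : B i = α • B j := WithLp.ofLp_injective 2 hα
    have hα0 : α = 0 := by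
      simpa [hα, inner_smul_right, inner_self_eq_one_of_norm_eq_one (B.orthonormal.1 j)] using
        B.orthonormal.2 (Ne.symm hne)
    exact B.orthonormal.ne_zero i (by simp [hα, hα0])
  · rw [Set.range_comp' WithLp.ofLp B, ← WithLp.coe_linearEquiv 2 ℂ,
      Submodule.span_image_linearEquiv, ← B.coe_toBasis, B.toBasis.span_eq, Submodule.map_top,
      LinearEquiv.range]
  · intro i j hij
    simpa [PiLp.inner_apply, mul_comm] using B.orthonormal.2 hij.symm

noncomputable def dftJacobiKernel (b d : ZMod N → ℝ) (j k : ZMod N) : ℂ :=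
  stdAddChar (-((j - 1) * k)) * b (j - 1) + stdAddChar (-(j * k)) * d j +
    stdAddChar (-((j + 1) * k)) * b j

theorem dft_jacobiOp_apply (b d : ZMod N → ℝ) (f : ZMod N → ℂ) (k : ZMod N) :
    𝓕 (jacobiOp b d f) k = ∑ j, dftJacobiKernel b d j k * f j := by
  have shift (φ : ZMod N → ℂ) : ∑ x, φ (x + 1) = ∑ x, φ x := Equiv.sum_comp (Equiv.addRight 1) φ
  have h₁ := shift fun j ↦ stdAddChar (-((j - 1) * k)) * b (j - 1) * f j
  have h₃ := shift fun j ↦ stdAddChar (-(j * k)) * b (j - 1) * f (j - 1)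
  simp only [add_sub_cancel_right] at h₁ h₃
  calc 𝓕 (jacobiOp b d f) k
      = ∑ j, stdAddChar (-(j * k)) * b j * f (j + 1) + ∑ j, stdAddChar (-(j * k)) * d j * f j +
          ∑ j, stdAddChar (-(j * k)) * b (j - 1) * f (j - 1) := by
        simp only [dft_apply, jacobiOp_apply, smul_eq_mul, ← sum_add_distrib]
        exact sum_congr rfl fun _ _ ↦ by ring
    _ = ∑ j, dftJacobiKernel b d j k * f j := by
        simp only [h₁, ← h₃, dftJacobiKernel, ← sum_add_distrib]
        exact sum_congr rfl fun _ _ ↦ by ring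

theorem jacobiOp_dft_apply (b d : ZMod N → ℝ) (f : ZMod N → ℂ) (k : ZMod N) :
    jacobiOp b d (𝓕 f) k = ∑ j, dftJacobiKernel b d k j * f j := by
  simp only [dft_apply, jacobiOp_apply, dftJacobiKernel, smul_eq_mul, mul_sum, ← sum_add_distrib]
  refine sum_congr rfl fun j _ ↦ ?_
  rw [mul_comm j, mul_comm j, mul_comm j]
  ring

theorem dft_jacobiOp (hK : ∀ j k, dftJacobiKernel b d j k = dftJacobiKernel b d k j)
    (f : ZMod N → ℂ) : 𝓕 (jacobiOp b d f) = jacobiOp b d (𝓕 f) := by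
  ext k
  simp only [dft_jacobiOp_apply, jacobiOp_dft_apply, hK]

theorem exists_dft_eq_smul_of_jacobiOp_eq_smul (hb : ∀ x, b x = 0 ↔ x = p)
    (hK : ∀ j k, dftJacobiKernel b d j k = dftJacobiKernel b d k j) {c : ℂ} {f : ZMod N → ℂ}
    (hf : jacobiOp b d f = c • f) (hf0 : f ≠ 0) : ∃ e : ℂ, 𝓕 f = e • f :=
  exists_eq_smul_of_jacobiOp_eq_smul hb hf
    (by rw [← dft_jacobiOp hK, hf, LinearEquiv.map_smul]) hf0

end ZMod

open scoped Real

noncomputable def offDiagCoeff (N : ℕ) (x : ZMod N) : ℝ := 1 + Real.cos (π * (2 * x.val + 1) / N)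

noncomputable def diagCoeff (N : ℕ) (x : ZMod N) : ℝ := 2 * Real.cos (2 * π * x.val / N)

section

variable {N : ℕ} [NeZero N]

theorem offDiagCoeff_sub_one (x : ZMod N) :
    offDiagCoeff N (x - 1) = 1 + Real.cos (π * (2 * x.val - 1) / N) := by
  obtain ⟨t, ht⟩ : (N : ℤ) ∣ (x - 1).val - (x.val - 1) := by
    rw [← ZMod.intCast_eq_intCast_iff_dvd_sub]
    push_cast
    simp
  have hN : (N : ℝ) ≠ 0 := Nat.cast_ne_zero.mpr (NeZero.ne N)
  have : π * (2 * ((x - 1).val : ℝ) + 1) / N = π * (2 * x.val - 1) / N + t * (2 * π) := by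
    have ht' : ((x - 1).val : ℝ) = x.val - 1 + N * t := by
      have : ((x - 1).val : ℤ) = x.val - 1 + N * t := by linarith
      exact_mod_cast this
    rw [ht']
    field_simp
    ring
  rw [offDiagCoeff, this, Real.cos_add_int_mul_two_pi]

theorem Jbig_eq_jacobiOp : Jbig N = ZMod.jacobiOp (offDiagCoeff N) (diagCoeff N) := by
  ext f x
  rw [Jbig, ZMod.jacobiOp_apply, offDiagCoeff_sub_one x]
  rfl

theorem offDiagCoeff_eq_zero_iff (x : ZMod N) : offDiagCoeff N x = 0 ↔ 2 * x.val + 1 = N := by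
  have hN : (0 : ℝ) < N := by exact_mod_cast Nat.pos_of_ne_zero (NeZero.ne N)
  have hx : (x.val : ℝ) + 1 ≤ N := by exact_mod_cast x.val_lt
  have hangle : π * (2 * x.val + 1) / N - π = π * ((2 * x.val + 1 - N) / N) := by
    field_simp
  have hlo : -1 < (2 * x.val + 1 - N : ℝ) / N := by
    rw [lt_div_iff₀ hN]; linarith [(x.val.cast_nonneg : (0 : ℝ) ≤ x.val)]
  have hhi : (2 * x.val + 1 - N : ℝ) / N < 1 := by
    rw [div_lt_one hN]; linarith
  rw [offDiagCoeff, add_eq_zero_iff_eq_neg', ← neg_eq_iff_eq_neg, ← Real.cos_sub_pi,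
    Real.cos_eq_one_iff_of_lt_of_lt, hangle, mul_eq_zero, div_eq_zero_iff,
    or_iff_right Real.pi_ne_zero, or_iff_left hN.ne', sub_eq_zero]
  · norm_cast
  · rw [hangle]; nlinarith [Real.pi_pos]
  · rw [hangle]; nlinarith [Real.pi_pos]

theorem exists_offDiagCoeff_eq_zero_iff_eq (hodd : Odd N) :
    ∃ p : ZMod N, ∀ x, offDiagCoeff N x = 0 ↔ x = p := by
  obtain ⟨r, hr⟩ := hodd
  have hr' : (r : ZMod N).val = r := ZMod.val_cast_of_lt (by omega)
  refine ⟨r, fun x ↦ ?_⟩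
  rw [offDiagCoeff_eq_zero_iff, ← (ZMod.val_injective N).eq_iff, hr']
  omega

theorem ofReal_cos_eq_exp (θ : ℝ) : (Real.cos θ : ℂ) = (exp (θ * I) + (exp (θ * I))⁻¹) / 2 := by
  rw [ofReal_cos, cos, neg_mul, exp_neg]

theorem ofReal_offDiagCoeff (x : ZMod N) :
    (offDiagCoeff N x : ℂ) =
      1 + (exp (π * I / N) * ZMod.stdAddChar x + (exp (π * I / N) * ZMod.stdAddChar x)⁻¹) / 2 := by
  have h : exp ((π * (2 * x.val + 1) / N : ℝ) * I) = exp (π * I / N) * ZMod.stdAddChar x := by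
    rw [ZMod.stdAddChar_apply, ZMod.toCircle_apply, ← exp_add]
    congr 1; push_cast; ring
  rw [offDiagCoeff, ofReal_add, ofReal_one, ofReal_cos_eq_exp, h]

theorem ofReal_offDiagCoeff_sub_one (x : ZMod N) :
    (offDiagCoeff N (x - 1) : ℂ) =
      1 + ((exp (π * I / N))⁻¹ * ZMod.stdAddChar x +
        ((exp (π * I / N))⁻¹ * ZMod.stdAddChar x)⁻¹) / 2 := by
  have h : exp ((π * (2 * x.val - 1) / N : ℝ) * I) =
      (exp (π * I / N))⁻¹ * ZMod.stdAddChar x := by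
    rw [ZMod.stdAddChar_apply, ZMod.toCircle_apply, ← exp_neg, ← exp_add]
    congr 1; push_cast; ring
  rw [offDiagCoeff_sub_one, ofReal_add, ofReal_one, ofReal_cos_eq_exp, h]

theorem ofReal_diagCoeff (x : ZMod N) :
    (diagCoeff N x : ℂ) = ZMod.stdAddChar x + (ZMod.stdAddChar x)⁻¹ := by
  have h : exp ((2 * π * x.val / N : ℝ) * I) = ZMod.stdAddChar x := by
    rw [ZMod.stdAddChar_apply, ZMod.toCircle_apply]
    congr 1; push_cast; ring
  rw [diagCoeff, ofReal_mul, ofReal_ofNat, ofReal_cos_eq_exp, h]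
  ring

theorem dftJacobiKernel_comm (j k : ZMod N) :
    ZMod.dftJacobiKernel (offDiagCoeff N) (diagCoeff N) j k =
      ZMod.dftJacobiKernel (offDiagCoeff N) (diagCoeff N) k j := by
  have hsub (x y : ZMod N) : ZMod.stdAddChar (-((x - 1) * y)) =
      ZMod.stdAddChar (-(x * y)) * ZMod.stdAddChar y := by
    rw [← AddChar.map_add_eq_mul]; ring_nf
  have hadd (x y : ZMod N) : ZMod.stdAddChar (-((x + 1) * y)) =
      ZMod.stdAddChar (-(x * y)) * (ZMod.stdAddChar y)⁻¹ := by
    rw [← AddChar.map_neg_eq_inv, ← AddChar.map_add_eq_mul]; ring_nf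
  simp only [ZMod.dftJacobiKernel, hsub, hadd, ofReal_offDiagCoeff_sub_one, mul_comm k j]
  simp only [ofReal_offDiagCoeff, ofReal_diagCoeff, mul_inv, inv_inv]
  ring

theorem dft_eq_zmod_dft (f : ZMod N → ℂ) : dft N f = 𝓕 f := by
  ext k
  rw [dft, ZMod.dft_apply]
  refine Finset.sum_nbij' (↑) ZMod.val (by simp) (by simp [ZMod.val_lt])
    (fun j hj ↦ ZMod.val_cast_of_lt (Finset.mem_range.mp hj)) (by simp) fun j _ ↦ ?_
  have : -((j : ZMod N) * k) = ((-(j * k.val : ℤ) : ℤ) : ZMod N) := by push_cast; simp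
  rw [this, ZMod.stdAddChar_coe, smul_eq_mul]
  congr 2
  push_cast
  ring

end

theorem statement19 (N : ℕ) [NeZero N] (hodd : Odd N) :
    (∃ (μ : Fin N → ℝ) (v : Fin N → (ZMod N → ℂ)),
      Function.Injective μ ∧ (∀ i, v i ≠ 0) ∧
      (∀ i, Jbig N (v i) = (μ i : ℂ) • v i) ∧
      Submodule.span ℂ (Set.range v) = ⊤ ∧
      (∀ i j, i ≠ j → ∑ x : ZMod N, v i x * (starRingEnd ℂ) (v j x) = 0) ∧
      (∀ i, ∃ c : ℂ, dft N (v i) = c • v i)) ∧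
    (∀ f : ZMod N → ℂ, f ≠ 0 → (∃ c : ℂ, Jbig N f = c • f) →
      ∃ d : ℂ, dft N f = d • f) := by
  obtain ⟨p, hp⟩ := exists_offDiagCoeff_eq_zero_iff_eq hodd
  have hdft {f : ZMod N → ℂ} {c : ℂ} (hf0 : f ≠ 0) (hf : Jbig N f = c • f) :
      ∃ e : ℂ, dft N f = e • f := by
    rw [Jbig_eq_jacobiOp] at hf
    rw [dft_eq_zmod_dft]
    exact ZMod.exists_dft_eq_smul_of_jacobiOp_eq_smul hp dftJacobiKernel_comm hf hf0
  obtain ⟨μ, v, hμ, hv0, hv, hspan, horth⟩ :=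
    ZMod.exists_orthogonal_eigenbasis_jacobiOp (d := diagCoeff N) hp
  rw [← Jbig_eq_jacobiOp] at hv
  exact ⟨⟨μ, v, hμ, hv0, hv, hspan, horth, fun i ↦ hdft (hv0 i) (hv i)⟩,
    fun f hf0 ⟨_, hf⟩ ↦ hdft hf0 hf⟩
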